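/- arXiv:2101.10151 — 9 statements merged into one kernel-verified Lean document; each statement's English description precedes it below -/
import Mathlib

section
/- Suppose a feasible schedule (pᴰ,pᶜ,e) maximizes the profit Π over the set of feasible schedules, and there is an interval t* such that 0 < pᴰ_{t*} < ḡᴰ (the ESR is marginal in discharging at t*) and Eₗₒ < e_t < Eₕᵢ for every t with t* ≤ t ≤ T (the SOC does not reach its limits from t* to the end of the horizon). Then π_{t*} = a_{t*}: the uniform price at t* equals the ESR's marginal discharging cost. -/
/-!
Increasing the discharge at `t*` by `ε` and lowering the state of charge by `ε / ξᴰ` from `t*`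
on keeps the schedule feasible for every small `ε` of either sign, because all the constraints
it touches are slack. The profit changes by `(π_{t*} - a_{t*}) ε`, so optimality makes `0` a
local maximum of a linear function of `ε`, whose slope must therefore vanish.
-/

open Finset

/-- The state of charge in the previous interval: `e₀` for the first interval,
`e (t-1)` otherwise. -/
noncomputable def socPrev {T : ℕ} (e0 : ℝ) (e : Fin T → ℝ) (t : Fin T) : ℝ :=
  if _ : 0 < t.val then e ⟨t.val - 1, lt_of_le_of_lt (Nat.sub_le _ _) t.isLt⟩ else e0

/-- Feasibility of an ESR schedule `(pD, pC, e)`. -/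
def Feasible {T : ℕ} (gDbar gCbar Elo Ehi e0 xiD xiC : ℝ)
    (pD pC e : Fin T → ℝ) : Prop :=
  ∀ t : Fin T,
    e t = socPrev e0 e t + xiC * pC t - pD t / xiD ∧
    Elo ≤ e t ∧ e t ≤ Ehi ∧
    0 ≤ pD t ∧ pD t ≤ gDbar ∧ 0 ≤ pC t ∧ pC t ≤ gCbar

/-- Profit of a schedule under the uniform price `π`. -/
noncomputable def profit {T : ℕ} (π a b pD pC : Fin T → ℝ) : ℝ :=
  ∑ t, ((π t - a t) * pD t + (b t - π t) * pC t)

open Filter Topology Set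

variable {T : ℕ}

def socShiftFrom (s : Fin T) (d : ℝ) (e : Fin T → ℝ) : Fin T → ℝ :=
  fun t => if s ≤ t then e t - d else e t

theorem socPrev_socShiftFrom (e0 d : ℝ) (e : Fin T → ℝ) (s t : Fin T) :
    socPrev e0 (socShiftFrom s d e) t =
      if s < t then socPrev e0 e t - d else socPrev e0 e t := by
  unfold socPrev socShiftFrom
  split_ifs <;> simp_all only [Fin.le_def, Fin.lt_def] <;> omega

section Perturbation

variable {gDbar gCbar Elo Ehi e0 xiD xiC : ℝ} {pD pC e : Fin T → ℝ} {s : Fin T}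

theorem Feasible.update_discharge
    (hfeas : Feasible gDbar gCbar Elo Ehi e0 xiD xiC pD pC e) {ε : ℝ}
    (hpD : pD s + ε ∈ Icc 0 gDbar) (he : ∀ t, s ≤ t → e t - ε / xiD ∈ Icc Elo Ehi) :
    Feasible gDbar gCbar Elo Ehi e0 xiD xiC
      (Function.update pD s (pD s + ε)) pC (socShiftFrom s (ε / xiD) e) := by
  intro t
  obtain ⟨hdyn, hlo, hhi, hDlo, hDhi, hClo, hChi⟩ := hfeas t
  rw [socPrev_socShiftFrom]
  rcases lt_trichotomy t s with hts | rfl | hst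
  · simp only [socShiftFrom, not_le.mpr hts, not_lt_of_gt hts, Function.update_of_ne hts.ne, if_false]
    exact ⟨hdyn, hlo, hhi, hDlo, hDhi, hClo, hChi⟩
  · simp only [socShiftFrom, le_refl, lt_irrefl, Function.update_self, if_true, if_false]
    refine ⟨by rw [add_div]; linarith, (he t le_rfl).1, (he t le_rfl).2, hpD.1, hpD.2, hClo, hChi⟩
  · simp only [socShiftFrom, hst.le, hst, Function.update_of_ne hst.ne', if_true]
    exact ⟨by linarith, (he t hst.le).1, (he t hst.le).2, hDlo, hDhi, hClo, hChi⟩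

theorem Feasible.eventually_update_discharge
    (hfeas : Feasible gDbar gCbar Elo Ehi e0 xiD xiC pD pC e)
    (hpD : pD s ∈ Ioo 0 gDbar) (he : ∀ t, s ≤ t → e t ∈ Ioo Elo Ehi) :
    ∀ᶠ ε in 𝓝 (0 : ℝ), Feasible gDbar gCbar Elo Ehi e0 xiD xiC
      (Function.update pD s (pD s + ε)) pC (socShiftFrom s (ε / xiD) e) := by
  have hpD' : ∀ᶠ ε in 𝓝 (0 : ℝ), pD s + ε ∈ Icc 0 gDbar := by
    have hcont : Tendsto (fun ε : ℝ => pD s + ε) (𝓝 0) (𝓝 (pD s)) :=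
      (continuous_const_add (pD s)).tendsto' 0 _ (add_zero _)
    exact (hcont.eventually (isOpen_Ioo.mem_nhds hpD)).mono fun _ h => Ioo_subset_Icc_self h
  have he' : ∀ᶠ ε in 𝓝 (0 : ℝ), ∀ t, s ≤ t → e t - ε / xiD ∈ Icc Elo Ehi := by
    refine eventually_all.mpr fun t => ?_
    by_cases hst : s ≤ t
    · have hcont : Tendsto (fun ε : ℝ => e t - ε / xiD) (𝓝 0) (𝓝 (e t)) :=
        (continuous_const.sub (continuous_id.div_const xiD)).tendsto' 0 _ (by simp)
      exact (hcont.eventually (isOpen_Ioo.mem_nhds (he t hst))).mono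
        fun _ h _ => Ioo_subset_Icc_self h
    · exact Eventually.of_forall fun _ h => absurd h hst
  filter_upwards [hpD', he'] with ε hε₁ hε₂
  exact hfeas.update_discharge hε₁ hε₂

end Perturbation

theorem profit_update_discharge (π a b pD pC : Fin T → ℝ) (s : Fin T) (ε : ℝ) :
    profit π a b (Function.update pD s (pD s + ε)) pC =
      profit π a b pD pC + (π s - a s) * ε := by
  unfold profit
  rw [← sub_eq_iff_eq_add', ← Finset.sum_sub_distrib, Finset.sum_eq_single_of_mem s (mem_univ s)]
  · rw [Function.update_self]; ring
  · intro t _ hts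
    rw [Function.update_of_ne hts]; ring

theorem price_eq_marginal_discharging_cost_general
    (T : ℕ)
    (gDbar gCbar Elo Ehi e0 xiD xiC : ℝ)
    (π a b : Fin T → ℝ)
    (pD pC e : Fin T → ℝ)
    (hfeas : Feasible gDbar gCbar Elo Ehi e0 xiD xiC pD pC e)
    (hmax : ∀ qD qC e' : Fin T → ℝ,
      Feasible gDbar gCbar Elo Ehi e0 xiD xiC qD qC e' →
      profit π a b qD qC ≤ profit π a b pD pC)
    (tstar : Fin T)
    (hmarg_lo : 0 < pD tstar) (hmarg_hi : pD tstar < gDbar)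
    (hsoc : ∀ t : Fin T, tstar ≤ t → Elo < e t ∧ e t < Ehi) :
    π tstar = a tstar := by
  set f : ℝ → ℝ := fun ε => profit π a b (Function.update pD tstar (pD tstar + ε)) pC
  have hlocal : IsLocalMax f 0 := by
    filter_upwards [hfeas.eventually_update_discharge ⟨hmarg_lo, hmarg_hi⟩ hsoc] with ε hε
    simpa [f] using hmax _ _ _ hε
  have hderiv : HasDerivAt f (π tstar - a tstar) 0 := by
    simp only [f, profit_update_discharge]
    simpa using ((hasDerivAt_id (0 : ℝ)).const_mul (π tstar - a tstar)).const_add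
      (profit π a b pD pC)
  exact sub_eq_zero.mp (hlocal.hasDerivAt_eq_zero hderiv)

/-- if a profit-maximizing feasible schedule is marginal in discharging at
`t*` and the SOC stays strictly within its bounds from `t*` to the end of the horizon,
then the uniform price at `t*` equals the marginal discharging cost: `π_{t*} = a_{t*}`. -/
theorem price_eq_marginal_discharging_cost
    (T : ℕ) (hT : 1 ≤ T)
    (gDbar gCbar Elo Ehi e0 xiD xiC : ℝ)
    (hgD : 0 < gDbar) (hgC : 0 < gCbar) (hE : Elo ≤ Ehi)
    (he0l : Elo ≤ e0) (he0u : e0 ≤ Ehi)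
    (hxiD0 : 0 < xiD) (hxiD1 : xiD ≤ 1) (hxiC0 : 0 < xiC) (hxiC1 : xiC ≤ 1)
    (π a b : Fin T → ℝ)
    (pD pC e : Fin T → ℝ)
    (hfeas : Feasible gDbar gCbar Elo Ehi e0 xiD xiC pD pC e)
    (hmax : ∀ qD qC e' : Fin T → ℝ,
      Feasible gDbar gCbar Elo Ehi e0 xiD xiC qD qC e' →
      profit π a b qD qC ≤ profit π a b pD pC)
    (tstar : Fin T)
    (hmarg_lo : 0 < pD tstar) (hmarg_hi : pD tstar < gDbar)
    (hsoc : ∀ t : Fin T, tstar ≤ t → Elo < e t ∧ e t < Ehi) :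
    π tstar = a tstar :=
  price_eq_marginal_discharging_cost_general T gDbar gCbar Elo Ehi e0 xiD xiC π a b pD pC e hfeas
    hmax tstar hmarg_lo hmarg_hi hsoc
end

section
/- Suppose a feasible schedule (pᴰ,pᶜ,e) maximizes the profit Π over the set of feasible schedules, and there is an interval t* such that 0 < pᶜ_{t*} < ḡᶜ (the ESR is marginal in charging at t*) and Eₗₒ < e_t < Eₕᵢ for every t with t* ≤ t ≤ T (the SOC does not reach its limits from t* to the end of the horizon). Then π_{t*} = b_{t*}: the uniform price at t* equals the ESR's marginal charging benefit. -/
open Finset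

/-!
Raise the charge at `t*` by `ε` and every later state of charge by `ξᶜ ε`. Since `pᶜ_{t*}` lies
strictly inside `(0, ḡᶜ)` and the state of charge strictly inside `(Eₗₒ, Eₕᵢ)` from `t*` on, this
schedule is feasible for all small `ε` of either sign, and its profit is `Π + (b_{t*} - π_{t*}) ε`.
Optimality makes this affine function of `ε` locally maximal at `0`, so its slope vanishes.
-/

open Filter Topology

lemma socPrev_add {T : ℕ} (x₀ y₀ : ℝ) (x y : Fin T → ℝ) (t : Fin T) :
    socPrev (x₀ + y₀) (x + y) t = socPrev x₀ x t + socPrev y₀ y t := by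
  unfold socPrev
  split_ifs <;> rfl

lemma socPrev_zero_step {T : ℕ} (s t : Fin T) (c : ℝ) :
    socPrev 0 (fun u => if s ≤ u then c else 0) t = if s < t then c else 0 := by
  unfold socPrev
  by_cases h₀ : 0 < t.val
  · have hpred : s ≤ ⟨t.val - 1, by omega⟩ ↔ s < t := by
      rw [Fin.le_def, Fin.lt_def]; dsimp only; omega
    simp only [dif_pos h₀, hpred]
  · have hst : ¬ s < t := by rw [Fin.lt_def]; omega
    simp only [dif_neg h₀, if_neg hst]

lemma Feasible.shift_charge {T : ℕ} {gDbar gCbar Elo Ehi e0 xiD xiC : ℝ}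
    {pD pC e : Fin T → ℝ} (hfeas : Feasible gDbar gCbar Elo Ehi e0 xiD xiC pD pC e)
    (s : Fin T) (ε : ℝ) (hlo : 0 ≤ pC s + ε) (hhi : pC s + ε ≤ gCbar)
    (hsoc : ∀ t, s ≤ t → Elo ≤ e t + xiC * ε ∧ e t + xiC * ε ≤ Ehi) :
    Feasible gDbar gCbar Elo Ehi e0 xiD xiC pD (pC + Pi.single s ε)
      (e + fun u => if s ≤ u then xiC * ε else 0) := by
  intro t
  obtain ⟨hrec, hElo, hEhi, hD₀, hD₁, hC₀, hC₁⟩ := hfeas t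
  have hprev := socPrev_add e0 0 e (fun u => if s ≤ u then xiC * ε else 0) t
  rw [add_zero, socPrev_zero_step] at hprev
  refine ⟨?_, ?_, ?_, hD₀, hD₁, ?_, ?_⟩
  · rw [hprev]
    rcases lt_trichotomy s t with hst | rfl | hts
    · simp only [Pi.add_apply, if_pos hst, if_pos hst.le, Pi.single_eq_of_ne hst.ne', hrec]
      ring
    · simp only [Pi.add_apply, if_pos le_rfl, lt_irrefl, if_false, Pi.single_eq_same, hrec]
      ring
    · simp [hts.not_ge, hts.not_gt, hts.ne, hrec]
  · by_cases hst : s ≤ t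
    · simpa [hst] using (hsoc t hst).1
    · simpa [hst] using hElo
  · by_cases hst : s ≤ t
    · simpa [hst] using (hsoc t hst).2
    · simpa [hst] using hEhi
  · by_cases hst : t = s
    · subst hst; simpa using hlo
    · simpa [hst] using hC₀
  · by_cases hst : t = s
    · subst hst; simpa using hhi
    · simpa [hst] using hC₁

lemma profit_add_single_charge {T : ℕ} (π a b pD pC : Fin T → ℝ) (s : Fin T) (ε : ℝ) :
    profit π a b pD (pC + Pi.single s ε) = profit π a b pD pC + (b s - π s) * ε := by
  simp only [profit, Pi.add_apply, mul_add, ← add_assoc, sum_add_distrib]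
  congr 1
  simp [Pi.single_apply, mul_ite]

lemma eventually_lt_add_mul {x y : ℝ} (h : x < y) (c : ℝ) :
    ∀ᶠ ε in 𝓝 (0 : ℝ), x < y + c * ε :=
  continuousAt_const.eventually_lt (by fun_prop) (by simpa using h)

lemma eventually_add_mul_lt {x y : ℝ} (h : y < x) (c : ℝ) :
    ∀ᶠ ε in 𝓝 (0 : ℝ), y + c * ε < x :=
  ContinuousAt.eventually_lt (by fun_prop) continuousAt_const (by simpa using h)

lemma Feasible.eventually_shift_charge {T : ℕ} {gDbar gCbar Elo Ehi e0 xiD xiC : ℝ}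
    {pD pC e : Fin T → ℝ} (hfeas : Feasible gDbar gCbar Elo Ehi e0 xiD xiC pD pC e)
    (s : Fin T) (hlo : 0 < pC s) (hhi : pC s < gCbar)
    (hsoc : ∀ t, s ≤ t → Elo < e t ∧ e t < Ehi) :
    ∀ᶠ ε in 𝓝 0, Feasible gDbar gCbar Elo Ehi e0 xiD xiC pD (pC + Pi.single s ε)
      (e + fun u => if s ≤ u then xiC * ε else 0) := by
  have hsoc' : ∀ᶠ ε in 𝓝 0, ∀ t, s ≤ t → Elo ≤ e t + xiC * ε ∧ e t + xiC * ε ≤ Ehi :=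
    eventually_all.2 fun t => eventually_imp_distrib_left.2 fun hst =>
      ((eventually_lt_add_mul (hsoc t hst).1 xiC).and
        (eventually_add_mul_lt (hsoc t hst).2 xiC)).mono fun _ h => ⟨h.1.le, h.2.le⟩
  filter_upwards [eventually_lt_add_mul hlo 1, eventually_add_mul_lt hhi 1, hsoc']
    with ε h₁ h₂ h₃
  rw [one_mul] at h₁ h₂
  exact hfeas.shift_charge s ε h₁.le h₂.le h₃

theorem price_eq_marginal_charging_benefit_general
    (T : ℕ)
    (gDbar gCbar Elo Ehi e0 xiD xiC : ℝ)
    (π a b : Fin T → ℝ)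
    (pD pC e : Fin T → ℝ)
    (hfeas : Feasible gDbar gCbar Elo Ehi e0 xiD xiC pD pC e)
    (hmax : ∀ qD qC e' : Fin T → ℝ,
      Feasible gDbar gCbar Elo Ehi e0 xiD xiC qD qC e' →
      profit π a b qD qC ≤ profit π a b pD pC)
    (tstar : Fin T)
    (hmarg_lo : 0 < pC tstar) (hmarg_hi : pC tstar < gCbar)
    (hsoc : ∀ t : Fin T, tstar ≤ t → Elo < e t ∧ e t < Ehi) :
    π tstar = b tstar := by
  have hlocal : IsLocalMax (fun ε => profit π a b pD (pC + Pi.single tstar ε)) 0 := by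
    filter_upwards [hfeas.eventually_shift_charge tstar hmarg_lo hmarg_hi hsoc] with ε hε
    simpa using hmax _ _ _ hε
  have hderiv : HasDerivAt (fun ε => profit π a b pD (pC + Pi.single tstar ε))
      (b tstar - π tstar) 0 := by
    simp only [profit_add_single_charge]
    simpa using ((hasDerivAt_id (0 : ℝ)).const_mul (b tstar - π tstar)).const_add
      (profit π a b pD pC)
  linarith [hlocal.hasDerivAt_eq_zero hderiv]

/-- if a profit-maximizing feasible schedule is marginal in charging at
`t*` and the SOC stays strictly within its bounds from `t*` to the end of the horizon,
then the uniform price at `t*` equals the marginal charging benefit: `π_{t*} = b_{t*}`. -/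
theorem price_eq_marginal_charging_benefit
    (T : ℕ) (hT : 1 ≤ T)
    (gDbar gCbar Elo Ehi e0 xiD xiC : ℝ)
    (hgD : 0 < gDbar) (hgC : 0 < gCbar) (hE : Elo ≤ Ehi)
    (he0l : Elo ≤ e0) (he0u : e0 ≤ Ehi)
    (hxiD0 : 0 < xiD) (hxiD1 : xiD ≤ 1) (hxiC0 : 0 < xiC) (hxiC1 : xiC ≤ 1)
    (π a b : Fin T → ℝ)
    (pD pC e : Fin T → ℝ)
    (hfeas : Feasible gDbar gCbar Elo Ehi e0 xiD xiC pD pC e)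
    (hmax : ∀ qD qC e' : Fin T → ℝ,
      Feasible gDbar gCbar Elo Ehi e0 xiD xiC qD qC e' →
      profit π a b qD qC ≤ profit π a b pD pC)
    (tstar : Fin T)
    (hmarg_lo : 0 < pC tstar) (hmarg_hi : pC tstar < gCbar)
    (hsoc : ∀ t : Fin T, tstar ≤ t → Elo < e t ∧ e t < Ehi) :
    π tstar = b tstar :=
  price_eq_marginal_charging_benefit_general T gDbar gCbar Elo Ehi e0 xiD xiC π a b pD pC e hfeas
    hmax tstar hmarg_lo hmarg_hi hsoc
end

section
/- (Theorem 1: uniform pricing cannot give all ESRs zero lost opportunity cost.) Let ESR i and ESR j be two ESRs, each with its own capacities, SOC bounds, initial SOC and efficiencies, with linear bid-in marginal costs (aⁱ,bⁱ) and (aʲ,bʲ) respectively, and let (gᴰ,ⁱ,gᶜ,ⁱ,eⁱ) and (gᴰ,ʲ,gᶜ,ʲ,eʲ) be feasible schedules (their dispatches). Suppose there is an interval t* such that: (1) the bid-in marginal costs are distinct across the two ESRs at t*, i.e. each of aⁱ_{t*} and bⁱ_{t*} differs from each of aʲ_{t*} and bʲ_{t*}; (2) both ESRs are marginal at t*, i.e.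 0 < gᴰ,ⁱ_{t*} < ḡᴰ,ⁱ or 0 < gᶜ,ⁱ_{t*} < ḡᶜ,ⁱ, and 0 < gᴰ,ʲ_{t*} < ḡᴰ,ʲ or 0 < gᶜ,ʲ_{t*} < ḡᶜ,ʲ; and (3) neither ESR's SOC reaches its limits from t* to the end of the horizon: Eₗₒᵏ < eᵏ_t < Eₕᵢᵏ for all t* ≤ t ≤ T and k ∈ {i,j}. Then there exists no uniform price vector π ∈ ℝᵀ such that simultaneously (gᴰ,ⁱ,gᶜ,ⁱ,eⁱ) maximizes ESR i's profit Πⁱ over ESR i's feasible set and (gᴰ,ʲ,gᶜ,ʲ,eʲ) maximizes ESR j's profit Πʲ over ESR j's feasible set. -/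
/-!
A marginal ESR whose SOC stays strictly inside its bounds from `t*` on can change its dispatch
at `t*` by a small `±δ` and absorb the change by shifting its whole later SOC trajectory by a
constant, without losing feasibility. Profit is linear in `δ`, so optimality forces the marginal
profit `π t* - a t*` (discharging) or `b t* - π t*` (charging) to vanish: the price at `t*` equals
one of that ESR's bids. Since the two ESRs' bids at `t*` are pairwise distinct, no single price
can do this for both.
-/

open Finset

open Filter Topology Set

section

variable {T : ℕ} {gDbar gCbar Elo Ehi e0 xiD xiC : ℝ} {pD pC e : Fin T → ℝ}

def shiftFrom (e : Fin T → ℝ) (s : Fin T) (c : ℝ) : Fin T → ℝ :=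
  fun t => if s ≤ t then e t + c else e t

lemma socPrev_shiftFrom (e : Fin T → ℝ) (s : Fin T) (c : ℝ) (t : Fin T) :
    socPrev e0 (shiftFrom e s c) t = socPrev e0 e t + if s < t then c else 0 := by
  unfold socPrev shiftFrom
  by_cases ht : 0 < t.val
  · have hiff : s ≤ (⟨t.val - 1, lt_of_le_of_lt (Nat.sub_le _ _) t.isLt⟩ : Fin T) ↔ s < t := by
      show s.val ≤ t.val - 1 ↔ s.val < t.val
      omega
    simp only [dif_pos ht, hiff]
    split_ifs <;> ring
  · have hst : ¬ s < t := by rw [Fin.lt_def]; omega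
    simp [ht, hst]

lemma profit_add_single (π a b pD pC : Fin T → ℝ) (s : Fin T) (x y : ℝ) :
    profit π a b (pD + Pi.single s x) (pC + Pi.single s y) =
      profit π a b pD pC + ((π s - a s) * x + (b s - π s) * y) := by
  simp only [profit, Pi.add_apply, Pi.single_apply, mul_add, mul_ite, mul_zero, sum_add_distrib,
    sum_ite_eq', Finset.mem_univ, ↓reduceIte]
  ring

lemma Feasible.add_single (h : Feasible gDbar gCbar Elo Ehi e0 xiD xiC pD pC e) (s : Fin T)
    {x y : ℝ} (hx : pD s + x ∈ Icc 0 gDbar) (hy : pC s + y ∈ Icc 0 gCbar)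
    (he : ∀ t, s ≤ t → e t + (xiC * y - x / xiD) ∈ Icc Elo Ehi) :
    Feasible gDbar gCbar Elo Ehi e0 xiD xiC (pD + Pi.single s x) (pC + Pi.single s y)
      (shiftFrom e s (xiC * y - x / xiD)) := by
  intro t
  obtain ⟨hdyn, hlo, hhi, hD0, hD1, hC0, hC1⟩ := h t
  rcases lt_trichotomy t s with hts | rfl | hst
  · have hst : ¬ s ≤ t := not_le.2 hts
    simp only [shiftFrom, socPrev_shiftFrom, Pi.add_apply, Pi.single_apply, hst, hts.ne,
      not_lt_of_gt hts, ↓reduceIte, add_zero]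
    exact ⟨hdyn, hlo, hhi, hD0, hD1, hC0, hC1⟩
  · simp only [shiftFrom, socPrev_shiftFrom, Pi.add_apply, Pi.single_eq_same, le_refl,
      lt_irrefl, ↓reduceIte, add_zero]
    exact ⟨by rw [hdyn]; ring, (he t le_rfl).1, (he t le_rfl).2, hx.1, hx.2, hy.1, hy.2⟩
  · simp only [shiftFrom, socPrev_shiftFrom, Pi.add_apply, Pi.single_apply, hst.le, hst,
      hst.ne', ↓reduceIte, add_zero]
    exact ⟨by rw [hdyn]; ring, (he t hst.le).1, (he t hst.le).2, hD0, hD1, hC0, hC1⟩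

def IsProfitMaximizing (gDbar gCbar Elo Ehi e0 xiD xiC : ℝ) (π a b pD pC : Fin T → ℝ) : Prop :=
  ∀ pD' pC' e' : Fin T → ℝ, Feasible gDbar gCbar Elo Ehi e0 xiD xiC pD' pC' e' →
    profit π a b pD' pC' ≤ profit π a b pD pC

lemma IsProfitMaximizing.marginal_profit_eq_zero {π a b : Fin T → ℝ}
    (hopt : IsProfitMaximizing gDbar gCbar Elo Ehi e0 xiD xiC π a b pD pC) (s : Fin T)
    (dD dC : ℝ)
    (hfeas : ∀ᶠ δ in 𝓝 (0 : ℝ), ∃ e', Feasible gDbar gCbar Elo Ehi e0 xiD xiC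
      (pD + Pi.single s (δ * dD)) (pC + Pi.single s (δ * dC)) e') :
    (π s - a s) * dD + (b s - π s) * dC = 0 := by
  set k := (π s - a s) * dD + (b s - π s) * dC
  have hmax : IsLocalMax (fun δ => profit π a b pD pC + δ * k) 0 := by
    filter_upwards [hfeas] with δ ⟨e', he'⟩
    have hle := hopt _ _ e' he'
    rw [profit_add_single] at hle
    simp only [zero_mul, add_zero]
    linarith
  have hderiv : HasDerivAt (fun δ => profit π a b pD pC + δ * k) k 0 := by
    simpa using ((hasDerivAt_id (0 : ℝ)).mul_const k).const_add (profit π a b pD pC)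
  exact hmax.hasDerivAt_eq_zero hderiv

lemma eventually_add_mul_mem_Ioo {x l u : ℝ} (hx : x ∈ Ioo l u) (d : ℝ) :
    ∀ᶠ δ in 𝓝 (0 : ℝ), x + δ * d ∈ Ioo l u := by
  have hlim : Tendsto (fun δ : ℝ => x + δ * d) (𝓝 0) (𝓝 x) :=
    Continuous.tendsto' (by fun_prop) 0 x (by simp)
  exact hlim (Ioo_mem_nhds hx.1 hx.2)

lemma Feasible.eventually_add_single (h : Feasible gDbar gCbar Elo Ehi e0 xiD xiC pD pC e)
    (s : Fin T) {dD dC : ℝ}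
    (hD : ∀ᶠ δ in 𝓝 (0 : ℝ), pD s + δ * dD ∈ Icc 0 gDbar)
    (hC : ∀ᶠ δ in 𝓝 (0 : ℝ), pC s + δ * dC ∈ Icc 0 gCbar)
    (hsoc : ∀ t, s ≤ t → e t ∈ Ioo Elo Ehi) :
    ∀ᶠ δ in 𝓝 (0 : ℝ), ∃ e', Feasible gDbar gCbar Elo Ehi e0 xiD xiC
      (pD + Pi.single s (δ * dD)) (pC + Pi.single s (δ * dC)) e' := by
  have hE : ∀ᶠ δ in 𝓝 (0 : ℝ), ∀ t, s ≤ t → e t + δ * (xiC * dC - dD / xiD) ∈ Icc Elo Ehi := by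
    refine eventually_all.2 fun t => ?_
    by_cases hst : s ≤ t
    · filter_upwards [eventually_add_mul_mem_Ioo (hsoc t hst) (xiC * dC - dD / xiD)] with δ hδ
      exact fun _ => Set.Ioo_subset_Icc_self hδ
    · exact Eventually.of_forall fun _ h => absurd h hst
  filter_upwards [hD, hC, hE] with δ hδD hδC hδE
  refine ⟨_, h.add_single s hδD hδC fun t ht => ?_⟩
  convert hδE t ht using 2
  ring

lemma IsProfitMaximizing.price_eq_of_marginal {π a b : Fin T → ℝ}
    (hfeas : Feasible gDbar gCbar Elo Ehi e0 xiD xiC pD pC e)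
    (hopt : IsProfitMaximizing gDbar gCbar Elo Ehi e0 xiD xiC π a b pD pC) (s : Fin T)
    (hmarg : (0 < pD s ∧ pD s < gDbar) ∨ (0 < pC s ∧ pC s < gCbar))
    (hsoc : ∀ t, s ≤ t → e t ∈ Ioo Elo Ehi) :
    π s = a s ∨ π s = b s := by
  obtain ⟨-, -, -, hD0, hD1, hC0, hC1⟩ := hfeas s
  have hfixed {x lo hi : ℝ} (hx : x ∈ Icc lo hi) : ∀ᶠ δ in 𝓝 (0 : ℝ), x + δ * 0 ∈ Icc lo hi :=
    Eventually.of_forall fun _ => by rwa [mul_zero, add_zero]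
  have hmove {x lo hi : ℝ} (hx : x ∈ Ioo lo hi) : ∀ᶠ δ in 𝓝 (0 : ℝ), x + δ * 1 ∈ Icc lo hi :=
    (eventually_add_mul_mem_Ioo hx 1).mono fun _ h => Set.Ioo_subset_Icc_self h
  rcases hmarg with hD | hC
  · have h := hopt.marginal_profit_eq_zero s 1 0 <|
      hfeas.eventually_add_single s (hmove hD) (hfixed ⟨hC0, hC1⟩) hsoc
    left; linarith
  · have h := hopt.marginal_profit_eq_zero s 0 1 <|
      hfeas.eventually_add_single s (hfixed ⟨hD0, hD1⟩) (hmove hC) hsoc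
    right; linarith

end

theorem no_uniform_price_supports_both_ESRs_general
    (T : ℕ)
    -- ESR i parameters
    (gDbari gCbari Eloi Ehii e0i xiDi xiCi : ℝ)
    -- ESR j parameters
    (gDbarj gCbarj Eloj Ehij e0j xiDj xiCj : ℝ)
    -- bid-in marginal costs
    (ai bi aj bj : Fin T → ℝ)
    -- dispatches (feasible schedules)
    (gDi gCi ei gDj gCj ej : Fin T → ℝ)
    (hfeasi : Feasible gDbari gCbari Eloi Ehii e0i xiDi xiCi gDi gCi ei)
    (hfeasj : Feasible gDbarj gCbarj Eloj Ehij e0j xiDj xiCj gDj gCj ej)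
    (tstar : Fin T)
    -- (1) distinct bid-in marginal costs at t*
    (hdist1 : ai tstar ≠ aj tstar) (hdist2 : ai tstar ≠ bj tstar)
    (hdist3 : bi tstar ≠ aj tstar) (hdist4 : bi tstar ≠ bj tstar)
    -- (2) both ESRs are marginal at t*
    (hmargi : (0 < gDi tstar ∧ gDi tstar < gDbari) ∨ (0 < gCi tstar ∧ gCi tstar < gCbari))
    (hmargj : (0 < gDj tstar ∧ gDj tstar < gDbarj) ∨ (0 < gCj tstar ∧ gCj tstar < gCbarj))
    -- (3) SOC strictly inside its bounds from t* to the end of the horizon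
    (hsoci : ∀ t : Fin T, tstar ≤ t → Eloi < ei t ∧ ei t < Ehii)
    (hsocj : ∀ t : Fin T, tstar ≤ t → Eloj < ej t ∧ ej t < Ehij) :
    ¬ ∃ π : Fin T → ℝ,
      (∀ pD pC e' : Fin T → ℝ,
        Feasible gDbari gCbari Eloi Ehii e0i xiDi xiCi pD pC e' →
        profit π ai bi pD pC ≤ profit π ai bi gDi gCi) ∧
      (∀ pD pC e' : Fin T → ℝ,
        Feasible gDbarj gCbarj Eloj Ehij e0j xiDj xiCj pD pC e' →
        profit π aj bj pD pC ≤ profit π aj bj gDj gCj) := by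
  rintro ⟨π, hopti, hoptj⟩
  have hi : π tstar = ai tstar ∨ π tstar = bi tstar :=
    IsProfitMaximizing.price_eq_of_marginal hfeasi hopti tstar hmargi hsoci
  have hj : π tstar = aj tstar ∨ π tstar = bj tstar :=
    IsProfitMaximizing.price_eq_of_marginal hfeasj hoptj tstar hmargj hsocj
  rcases hi with hi | hi <;> rcases hj with hj | hj
  exacts [hdist1 (hi.symm.trans hj), hdist2 (hi.symm.trans hj), hdist3 (hi.symm.trans hj),
    hdist4 (hi.symm.trans hj)]

/-- Theorem 1: under the conditions that two ESRs have distinct bid-in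
marginal costs at `t*`, are both marginal at `t*`, and neither reaches its SOC limits
from `t*` to the end of the horizon, no uniform price vector makes both dispatches
simultaneously profit-maximizing for the respective ESRs. -/
theorem no_uniform_price_supports_both_ESRs
    (T : ℕ) (hT : 1 ≤ T)
    -- ESR i parameters
    (gDbari gCbari Eloi Ehii e0i xiDi xiCi : ℝ)
    (hgDi : 0 < gDbari) (hgCi : 0 < gCbari) (hEi : Eloi ≤ Ehii)
    (he0il : Eloi ≤ e0i) (he0iu : e0i ≤ Ehii)
    (hxiDi0 : 0 < xiDi) (hxiDi1 : xiDi ≤ 1) (hxiCi0 : 0 < xiCi) (hxiCi1 : xiCi ≤ 1)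
    -- ESR j parameters
    (gDbarj gCbarj Eloj Ehij e0j xiDj xiCj : ℝ)
    (hgDj : 0 < gDbarj) (hgCj : 0 < gCbarj) (hEj : Eloj ≤ Ehij)
    (he0jl : Eloj ≤ e0j) (he0ju : e0j ≤ Ehij)
    (hxiDj0 : 0 < xiDj) (hxiDj1 : xiDj ≤ 1) (hxiCj0 : 0 < xiCj) (hxiCj1 : xiCj ≤ 1)
    -- bid-in marginal costs
    (ai bi aj bj : Fin T → ℝ)
    -- dispatches (feasible schedules)
    (gDi gCi ei gDj gCj ej : Fin T → ℝ)
    (hfeasi : Feasible gDbari gCbari Eloi Ehii e0i xiDi xiCi gDi gCi ei)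
    (hfeasj : Feasible gDbarj gCbarj Eloj Ehij e0j xiDj xiCj gDj gCj ej)
    (tstar : Fin T)
    -- (1) distinct bid-in marginal costs at t*
    (hdist1 : ai tstar ≠ aj tstar) (hdist2 : ai tstar ≠ bj tstar)
    (hdist3 : bi tstar ≠ aj tstar) (hdist4 : bi tstar ≠ bj tstar)
    -- (2) both ESRs are marginal at t*
    (hmargi : (0 < gDi tstar ∧ gDi tstar < gDbari) ∨ (0 < gCi tstar ∧ gCi tstar < gCbari))
    (hmargj : (0 < gDj tstar ∧ gDj tstar < gDbarj) ∨ (0 < gCj tstar ∧ gCj tstar < gCbarj))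
    -- (3) SOC strictly inside its bounds from t* to the end of the horizon
    (hsoci : ∀ t : Fin T, tstar ≤ t → Eloi < ei t ∧ ei t < Ehii)
    (hsocj : ∀ t : Fin T, tstar ≤ t → Eloj < ej t ∧ ej t < Ehij) :
    ¬ ∃ π : Fin T → ℝ,
      (∀ pD pC e' : Fin T → ℝ,
        Feasible gDbari gCbari Eloi Ehii e0i xiDi xiCi pD pC e' →
        profit π ai bi pD pC ≤ profit π ai bi gDi gCi) ∧
      (∀ pD pC e' : Fin T → ℝ,
        Feasible gDbarj gCbarj Eloj Ehij e0j xiDj xiCj pD pC e' →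
        profit π aj bj pD pC ≤ profit π aj bj gDj gCj) :=
  no_uniform_price_supports_both_ESRs_general T gDbari gCbari Eloi Ehii e0i xiDi xiCi gDbarj gCbarj
    Eloj Ehij e0j xiDj xiCj ai bi aj bj gDi gCi ei gDj gCj ej hfeasi hfeasj tstar hdist1 hdist2
    hdist3 hdist4 hmargi hmargj hsoci hsocj
end

section
/- (Theorem 3, first part: zero lost opportunity cost under TLMP.) Suppose (gᴰ,gᶜ,e) is a feasible ESR schedule and there exist vectors λ, φ ∈ ℝᵀ and nonnegative vectors ρ̲ᴰ, ρ̄ᴰ, ρ̲ᶜ, ρ̄ᶜ ∈ ℝᵀ satisfying, for every t = 1,…,T, the stationarity conditions of the multi-interval economic dispatch, a_t − λ_t + φ_t/ξᴰ + ρ̄ᴰ_t − ρ̲ᴰ_t = 0 and −b_t + λ_t − ξᶜ φ_t + ρ̄ᶜ_t − ρ̲ᶜ_t = 0, together with the complementary slackness conditions ρ̲ᴰ_t gᴰ_t = 0, ρ̄ᴰ_t (ḡᴰ − gᴰ_t) = 0, ρ̲ᶜ_t gᶜ_t = 0, ρ̄ᶜ_t (ḡᶜ − gᶜ_t) = 0.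 Define the TLMP prices πᴰ_t = λ_t − φ_t/ξᴰ and πᶜ_t = λ_t − ξᶜ φ_t. Then (gᴰ,gᶜ,e) maximizes the profit Σ_{t=1}^T [(πᴰ_t − a_t) pᴰ_t + (b_t − πᶜ_t) pᶜ_t] over all feasible schedules (pᴰ,pᶜ,e′); in particular, the ESR's lost opportunity cost under TLMP is zero. -/
/-!
Under TLMP, stationarity says exactly that the discharging margin `πᴰ_t - a_t` equals
`ρ̄ᴰ_t - ρ̲ᴰ_t` and the charging margin `b_t - πᶜ_t` equals `ρ̄ᶜ_t - ρ̲ᶜ_t`. With complementary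
slackness, a slope of the form `ρ̄ - ρ̲` makes `g_t` a maximiser of the linear term over the
whole box `[0, ḡ]`, so the profit is maximised interval by interval and the state-of-charge
coupling of a competing schedule never enters.
-/

open Finset

/-- Profit of a schedule under (possibly non-uniform) discharging prices `πD` and
charging prices `πC`, with marginal discharging costs `a` and charging benefits `b`. -/
noncomputable def profitNU {T : ℕ} (piD piC a b pD pC : Fin T → ℝ) : ℝ :=
  ∑ t, ((piD t - a t) * pD t + (b t - piC t) * pC t)

theorem mul_le_mul_of_kkt_box {c ρl ρu g gbar p : ℝ} (hc : c = ρu - ρl)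
    (hρl : 0 ≤ ρl) (hρu : 0 ≤ ρu) (hl : ρl * g = 0) (hu : ρu * (gbar - g) = 0)
    (hp0 : 0 ≤ p) (hp : p ≤ gbar) : c * p ≤ c * g := by
  have gap : c * g - c * p = ρu * (gbar - p) + ρl * p := by
    rw [hc]; linear_combination -hu - hl
  linarith [mul_nonneg hρu (sub_nonneg.2 hp), mul_nonneg hρl hp0]

theorem TLMP_zero_LOC_for_ESR_general
    (T : ℕ)
    (gDbar gCbar Elo Ehi e0 xiD xiC : ℝ)
    (a b : Fin T → ℝ)
    (gD gC : Fin T → ℝ)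
    (lam phi : Fin T → ℝ)
    (rhoDl rhoDu rhoCl rhoCu : Fin T → ℝ)
    (hrhoDl : ∀ t, 0 ≤ rhoDl t) (hrhoDu : ∀ t, 0 ≤ rhoDu t)
    (hrhoCl : ∀ t, 0 ≤ rhoCl t) (hrhoCu : ∀ t, 0 ≤ rhoCu t)
    -- stationarity of the multi-interval economic dispatch
    (hstatD : ∀ t, a t - lam t + phi t / xiD + rhoDu t - rhoDl t = 0)
    (hstatC : ∀ t, -(b t) + lam t - xiC * phi t + rhoCu t - rhoCl t = 0)
    -- complementary slackness
    (hcsDl : ∀ t, rhoDl t * gD t = 0) (hcsDu : ∀ t, rhoDu t * (gDbar - gD t) = 0)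
    (hcsCl : ∀ t, rhoCl t * gC t = 0) (hcsCu : ∀ t, rhoCu t * (gCbar - gC t) = 0)
    -- the TLMP prices
    (piD piC : Fin T → ℝ)
    (hpiD : ∀ t, piD t = lam t - phi t / xiD)
    (hpiC : ∀ t, piC t = lam t - xiC * phi t) :
    ∀ pD pC e' : Fin T → ℝ,
      Feasible gDbar gCbar Elo Ehi e0 xiD xiC pD pC e' →
      profitNU piD piC a b pD pC ≤ profitNU piD piC a b gD gC := by
  intro pD pC e' hfeas'
  refine sum_le_sum fun t _ => ?_
  obtain ⟨-, -, -, hpD0, hpDu, hpC0, hpCu⟩ := hfeas' t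
  have marginD : piD t - a t = rhoDu t - rhoDl t := by linarith [hstatD t, hpiD t]
  have marginC : b t - piC t = rhoCu t - rhoCl t := by linarith [hstatC t, hpiC t]
  exact add_le_add
    (mul_le_mul_of_kkt_box marginD (hrhoDl t) (hrhoDu t) (hcsDl t) (hcsDu t) hpD0 hpDu)
    (mul_le_mul_of_kkt_box marginC (hrhoCl t) (hrhoCu t) (hcsCl t) (hcsCu t) hpC0 hpCu)

/-- Theorem 3, first part: if a feasible ESR schedule satisfies the
stationarity and complementary-slackness conditions of the multi-interval economic
dispatch with multipliers `λ` (energy price) and `φ` (SOC price), then under the TLMP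
prices `πᴰ_t = λ_t − φ_t/ξᴰ` and `πᶜ_t = λ_t − ξᶜ φ_t` the schedule maximizes the ESR's
profit over the feasible set; in particular its lost opportunity cost is zero. -/
theorem TLMP_zero_LOC_for_ESR
    (T : ℕ) (hT : 1 ≤ T)
    (gDbar gCbar Elo Ehi e0 xiD xiC : ℝ)
    (hgD : 0 < gDbar) (hgC : 0 < gCbar) (hE : Elo ≤ Ehi)
    (he0l : Elo ≤ e0) (he0u : e0 ≤ Ehi)
    (hxiD0 : 0 < xiD) (hxiD1 : xiD ≤ 1) (hxiC0 : 0 < xiC) (hxiC1 : xiC ≤ 1)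
    (a b : Fin T → ℝ)
    (gD gC e : Fin T → ℝ)
    (hfeas : Feasible gDbar gCbar Elo Ehi e0 xiD xiC gD gC e)
    (lam phi : Fin T → ℝ)
    (rhoDl rhoDu rhoCl rhoCu : Fin T → ℝ)
    (hrhoDl : ∀ t, 0 ≤ rhoDl t) (hrhoDu : ∀ t, 0 ≤ rhoDu t)
    (hrhoCl : ∀ t, 0 ≤ rhoCl t) (hrhoCu : ∀ t, 0 ≤ rhoCu t)
    -- stationarity of the multi-interval economic dispatch
    (hstatD : ∀ t, a t - lam t + phi t / xiD + rhoDu t - rhoDl t = 0)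
    (hstatC : ∀ t, -(b t) + lam t - xiC * phi t + rhoCu t - rhoCl t = 0)
    -- complementary slackness
    (hcsDl : ∀ t, rhoDl t * gD t = 0) (hcsDu : ∀ t, rhoDu t * (gDbar - gD t) = 0)
    (hcsCl : ∀ t, rhoCl t * gC t = 0) (hcsCu : ∀ t, rhoCu t * (gCbar - gC t) = 0)
    -- the TLMP prices
    (piD piC : Fin T → ℝ)
    (hpiD : ∀ t, piD t = lam t - phi t / xiD)
    (hpiC : ∀ t, piC t = lam t - xiC * phi t) :
    ∀ pD pC e' : Fin T → ℝ,
      Feasible gDbar gCbar Elo Ehi e0 xiD xiC pD pC e' →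
      profitNU piD piC a b pD pC ≤ profitNU piD piC a b gD gC :=
  TLMP_zero_LOC_for_ESR_general T gDbar gCbar Elo Ehi e0 xiD xiC a b gD gC lam phi rhoDl rhoDu rhoCl
    rhoCu hrhoDl hrhoDu hrhoCl hrhoCu hstatD hstatC hcsDl hcsDu hcsCl hcsCu piD piC hpiD hpiC
end

section
/- (Per-interval decoupling under TLMP.) Under the hypotheses of the previous statement — a feasible ESR schedule (gᴰ,gᶜ,e) with multipliers λ, φ ∈ ℝᵀ and nonnegative ρ̲ᴰ, ρ̄ᴰ, ρ̲ᶜ, ρ̄ᶜ satisfying a_t − λ_t + φ_t/ξᴰ + ρ̄ᴰ_t − ρ̲ᴰ_t = 0, −b_t + λ_t − ξᶜ φ_t + ρ̄ᶜ_t − ρ̲ᶜ_t = 0 and complementary slackness with the power bounds — and with TLMP prices πᴰ_t = λ_t − φ_t/ξᴰ and πᶜ_t = λ_t − ξᶜ φ_t, the dispatch maximizes each interval's profit separately: for every t and every x ∈ [0, ḡᴰ], (πᴰ_t − a_t) x ≤ (πᴰ_t − a_t) gᴰ_t, and for every y ∈ [0, ḡᶜ], (b_t − πᶜ_t) y ≤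 (b_t − πᶜ_t) gᶜ_t. In particular, under TLMP the multi-interval ESR problem decouples into single-interval problems and the intertemporal SOC constraints place no further restriction on optimality. -/
open Finset

theorem isMaxOn_Icc_of_complementary_slackness {ρl ρu g gbar : ℝ}
    (hρl : 0 ≤ ρl) (hρu : 0 ≤ ρu) (hl : ρl * g = 0) (hu : ρu * (gbar - g) = 0) :
    IsMaxOn (fun x => (ρu - ρl) * x) (Set.Icc 0 gbar) g := by
  refine isMaxOn_iff.mpr fun x ⟨hx0, hx⟩ => ?_
  calc (ρu - ρl) * x = ρu * x - ρl * x := sub_mul ..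
    _ ≤ ρu * x := sub_le_self _ (mul_nonneg hρl hx0)
    _ ≤ ρu * gbar := mul_le_mul_of_nonneg_left hx hρu
    _ = (ρu - ρl) * g := by linear_combination hu + hl

theorem TLMP_per_interval_decoupling_general
    (T : ℕ)
    (gDbar gCbar xiD xiC : ℝ)
    (a b : Fin T → ℝ)
    (gD gC : Fin T → ℝ)
    (lam phi : Fin T → ℝ)
    (rhoDl rhoDu rhoCl rhoCu : Fin T → ℝ)
    (hrhoDl : ∀ t, 0 ≤ rhoDl t) (hrhoDu : ∀ t, 0 ≤ rhoDu t)
    (hrhoCl : ∀ t, 0 ≤ rhoCl t) (hrhoCu : ∀ t, 0 ≤ rhoCu t)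
    -- stationarity of the multi-interval economic dispatch
    (hstatD : ∀ t, a t - lam t + phi t / xiD + rhoDu t - rhoDl t = 0)
    (hstatC : ∀ t, -(b t) + lam t - xiC * phi t + rhoCu t - rhoCl t = 0)
    -- complementary slackness with the power bounds
    (hcsDl : ∀ t, rhoDl t * gD t = 0) (hcsDu : ∀ t, rhoDu t * (gDbar - gD t) = 0)
    (hcsCl : ∀ t, rhoCl t * gC t = 0) (hcsCu : ∀ t, rhoCu t * (gCbar - gC t) = 0)
    -- the TLMP prices
    (piD piC : Fin T → ℝ)
    (hpiD : ∀ t, piD t = lam t - phi t / xiD)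
    (hpiC : ∀ t, piC t = lam t - xiC * phi t) :
    ∀ t : Fin T,
      (∀ x : ℝ, 0 ≤ x → x ≤ gDbar → (piD t - a t) * x ≤ (piD t - a t) * gD t) ∧
      (∀ y : ℝ, 0 ≤ y → y ≤ gCbar → (b t - piC t) * y ≤ (b t - piC t) * gC t) := by
  intro t
  -- The TLMP margins are exactly `ρ̄ - ρ̲`: the SOC multiplier `φ` cancels out.
  have hD : piD t - a t = rhoDu t - rhoDl t := by linarith [hstatD t, hpiD t]
  have hC : b t - piC t = rhoCu t - rhoCl t := by linarith [hstatC t, hpiC t]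
  refine ⟨fun x hx0 hx1 => ?_, fun y hy0 hy1 => ?_⟩
  · rw [hD]
    exact isMaxOn_iff.mp (isMaxOn_Icc_of_complementary_slackness (hrhoDl t) (hrhoDu t)
      (hcsDl t) (hcsDu t)) x ⟨hx0, hx1⟩
  · rw [hC]
    exact isMaxOn_iff.mp (isMaxOn_Icc_of_complementary_slackness (hrhoCl t) (hrhoCu t)
      (hcsCl t) (hcsCu t)) y ⟨hy0, hy1⟩

/-- per-interval decoupling under TLMP: under the KKT conditions of the
multi-interval dispatch and the TLMP prices, the dispatch maximizes each interval's
profit separately over the power bounds alone — the intertemporal SOC constraints place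
no further restriction on optimality. -/
theorem TLMP_per_interval_decoupling
    (T : ℕ) (hT : 1 ≤ T)
    (gDbar gCbar Elo Ehi e0 xiD xiC : ℝ)
    (hgD : 0 < gDbar) (hgC : 0 < gCbar) (hE : Elo ≤ Ehi)
    (he0l : Elo ≤ e0) (he0u : e0 ≤ Ehi)
    (hxiD0 : 0 < xiD) (hxiD1 : xiD ≤ 1) (hxiC0 : 0 < xiC) (hxiC1 : xiC ≤ 1)
    (a b : Fin T → ℝ)
    (gD gC e : Fin T → ℝ)
    (hfeas : Feasible gDbar gCbar Elo Ehi e0 xiD xiC gD gC e)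
    (lam phi : Fin T → ℝ)
    (rhoDl rhoDu rhoCl rhoCu : Fin T → ℝ)
    (hrhoDl : ∀ t, 0 ≤ rhoDl t) (hrhoDu : ∀ t, 0 ≤ rhoDu t)
    (hrhoCl : ∀ t, 0 ≤ rhoCl t) (hrhoCu : ∀ t, 0 ≤ rhoCu t)
    -- stationarity of the multi-interval economic dispatch
    (hstatD : ∀ t, a t - lam t + phi t / xiD + rhoDu t - rhoDl t = 0)
    (hstatC : ∀ t, -(b t) + lam t - xiC * phi t + rhoCu t - rhoCl t = 0)
    -- complementary slackness with the power bounds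
    (hcsDl : ∀ t, rhoDl t * gD t = 0) (hcsDu : ∀ t, rhoDu t * (gDbar - gD t) = 0)
    (hcsCl : ∀ t, rhoCl t * gC t = 0) (hcsCu : ∀ t, rhoCu t * (gCbar - gC t) = 0)
    -- the TLMP prices
    (piD piC : Fin T → ℝ)
    (hpiD : ∀ t, piD t = lam t - phi t / xiD)
    (hpiC : ∀ t, piC t = lam t - xiC * phi t) :
    ∀ t : Fin T,
      (∀ x : ℝ, 0 ≤ x → x ≤ gDbar → (piD t - a t) * x ≤ (piD t - a t) * gD t) ∧
      (∀ y : ℝ, 0 ≤ y → y ≤ gCbar → (b t - piC t) * y ≤ (b t - piC t) * gC t) :=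
  TLMP_per_interval_decoupling_general T gDbar gCbar xiD xiC a b gD gC lam phi rhoDl rhoDu rhoCl
    rhoCu hrhoDl hrhoDu hrhoCl hrhoCu hstatD hstatC hcsDl hcsDu hcsCl hcsCu piD piC hpiD hpiC
end

section
/- (Theorem 3, second part: truthful bidding is optimal for a price-taking ESR under TLMP.) Let qᴰ, qᶜ ∈ ℝᵀ be the ESR's true linear marginal discharging costs and charging benefits, and let πᴰ, πᶜ ∈ ℝᵀ be fixed price vectors (price-taker assumption: the ESR's bid does not affect prices). Suppose the truthful-bid dispatch (gᴰ,gᶜ,e) is a feasible schedule admitting vectors λ, φ ∈ ℝᵀ and nonnegative ρ̲ᴰ, ρ̄ᴰ, ρ̲ᶜ, ρ̄ᶜ ∈ ℝᵀ with qᴰ_t − λ_t + φ_t/ξᴰ + ρ̄ᴰ_t − ρ̲ᴰ_t = 0, −qᶜ_t + λ_t − ξᶜ φ_t + ρ̄ᶜ_t − ρ̲ᶜ_t = 0, complementary slackness ρ̲ᴰ_t gᴰ_t = 0, ρ̄ᴰ_t (ḡᴰ − gᴰ_t) = 0, ρ̲ᶜ_t gᶜ_t = 0, ρ̄ᶜ_t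 (ḡᶜ − gᶜ_t) = 0, and πᴰ_t = λ_t − φ_t/ξᴰ, πᶜ_t = λ_t − ξᶜ φ_t for all t. Then for every feasible schedule (pᴰ,pᶜ,e′) — in particular for the dispatch that would result from any alternative (untruthful) bid — the true profit satisfies Σ_{t=1}^T [(πᴰ_t − qᴰ_t) pᴰ_t + (qᶜ_t − πᶜ_t) pᶜ_t] ≤ Σ_{t=1}^T [(πᴰ_t − qᴰ_t) gᴰ_t + (qᶜ_t − πᶜ_t) gᶜ_t]; hence no alternative bid can yield the price-taking ESR a higher profit than truthful bidding. -/
open Finset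

/-!
Under TLMP the φ-terms of the prices cancel those of the stationarity conditions, so the
ESR's true marginal profit in interval `t` is `ρ̄_t − ρ̲_t` for discharging and for
charging alike. A linear function whose coefficient splits into nonnegative multipliers
complementary to the box bounds at `g` is maximised at `g` over the box; hence the truthful
dispatch maximises the true profit interval by interval, and the state-of-charge coupling
plays no role.
-/

theorem sub_mul_le_sub_mul_of_complementary_slackness {α : Type*} [CommRing α]
    [PartialOrder α] [IsOrderedRing α] {lo hi ρl ρu g p : α} (hρl : 0 ≤ ρl) (hρu : 0 ≤ ρu)
    (hcsl : ρl * (g - lo) = 0) (hcsu : ρu * (hi - g) = 0) (hlo : lo ≤ p) (hhi : p ≤ hi) :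
    (ρu - ρl) * p ≤ (ρu - ρl) * g :=
  calc (ρu - ρl) * p = ρu * p - ρl * p := sub_mul _ _ _
    _ ≤ ρu * hi - ρl * lo :=
      sub_le_sub (mul_le_mul_of_nonneg_left hhi hρu) (mul_le_mul_of_nonneg_left hlo hρl)
    _ = (ρu - ρl) * g := by linear_combination hcsu + hcsl

theorem TLMP_truthful_bidding_optimal_general
    (T : ℕ)
    (gDbar gCbar Elo Ehi e0 xiD xiC : ℝ)
    -- true marginal discharging costs and charging benefits
    (qD qC : Fin T → ℝ)
    -- truthful-bid dispatch
    (gD gC : Fin T → ℝ)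
    (lam phi : Fin T → ℝ)
    (rhoDl rhoDu rhoCl rhoCu : Fin T → ℝ)
    (hrhoDl : ∀ t, 0 ≤ rhoDl t) (hrhoDu : ∀ t, 0 ≤ rhoDu t)
    (hrhoCl : ∀ t, 0 ≤ rhoCl t) (hrhoCu : ∀ t, 0 ≤ rhoCu t)
    -- stationarity with the true marginal costs
    (hstatD : ∀ t, qD t - lam t + phi t / xiD + rhoDu t - rhoDl t = 0)
    (hstatC : ∀ t, -(qC t) + lam t - xiC * phi t + rhoCu t - rhoCl t = 0)
    -- complementary slackness
    (hcsDl : ∀ t, rhoDl t * gD t = 0) (hcsDu : ∀ t, rhoDu t * (gDbar - gD t) = 0)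
    (hcsCl : ∀ t, rhoCl t * gC t = 0) (hcsCu : ∀ t, rhoCu t * (gCbar - gC t) = 0)
    -- fixed TLMP prices (price-taker assumption)
    (piD piC : Fin T → ℝ)
    (hpiD : ∀ t, piD t = lam t - phi t / xiD)
    (hpiC : ∀ t, piC t = lam t - xiC * phi t) :
    ∀ pD pC e' : Fin T → ℝ,
      Feasible gDbar gCbar Elo Ehi e0 xiD xiC pD pC e' →
      profitNU piD piC qD qC pD pC ≤ profitNU piD piC qD qC gD gC := by
  intro pD pC e' hp
  refine Finset.sum_le_sum fun t _ => ?_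
  obtain ⟨-, -, -, hpD0, hpD, hpC0, hpC⟩ := hp t
  have hD : piD t - qD t = rhoDu t - rhoDl t := by linarith [hpiD t, hstatD t]
  have hC : qC t - piC t = rhoCu t - rhoCl t := by linarith [hpiC t, hstatC t]
  rw [hD, hC]
  exact add_le_add
    (sub_mul_le_sub_mul_of_complementary_slackness (hrhoDl t) (hrhoDu t)
      (by rw [sub_zero]; exact hcsDl t) (hcsDu t) hpD0 hpD)
    (sub_mul_le_sub_mul_of_complementary_slackness (hrhoCl t) (hrhoCu t)
      (by rw [sub_zero]; exact hcsCl t) (hcsCu t) hpC0 hpC)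

/-- Theorem 3, second part: under TLMP, truthful bidding is optimal for a
price-taking ESR. If the truthful-bid dispatch satisfies the KKT conditions of the
economic dispatch with the true marginal costs `qᴰ, qᶜ`, and the TLMP prices are
`πᴰ_t = λ_t − φ_t/ξᴰ`, `πᶜ_t = λ_t − ξᶜ φ_t`, then the true profit at any feasible
schedule — in particular at the dispatch resulting from any alternative bid — is at
most the true profit at the truthful-bid dispatch. -/
theorem TLMP_truthful_bidding_optimal
    (T : ℕ) (hT : 1 ≤ T)
    (gDbar gCbar Elo Ehi e0 xiD xiC : ℝ)
    (hgD : 0 < gDbar) (hgC : 0 < gCbar) (hE : Elo ≤ Ehi)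
    (he0l : Elo ≤ e0) (he0u : e0 ≤ Ehi)
    (hxiD0 : 0 < xiD) (hxiD1 : xiD ≤ 1) (hxiC0 : 0 < xiC) (hxiC1 : xiC ≤ 1)
    -- true marginal discharging costs and charging benefits
    (qD qC : Fin T → ℝ)
    -- truthful-bid dispatch
    (gD gC e : Fin T → ℝ)
    (hfeas : Feasible gDbar gCbar Elo Ehi e0 xiD xiC gD gC e)
    (lam phi : Fin T → ℝ)
    (rhoDl rhoDu rhoCl rhoCu : Fin T → ℝ)
    (hrhoDl : ∀ t, 0 ≤ rhoDl t) (hrhoDu : ∀ t, 0 ≤ rhoDu t)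
    (hrhoCl : ∀ t, 0 ≤ rhoCl t) (hrhoCu : ∀ t, 0 ≤ rhoCu t)
    -- stationarity with the true marginal costs
    (hstatD : ∀ t, qD t - lam t + phi t / xiD + rhoDu t - rhoDl t = 0)
    (hstatC : ∀ t, -(qC t) + lam t - xiC * phi t + rhoCu t - rhoCl t = 0)
    -- complementary slackness
    (hcsDl : ∀ t, rhoDl t * gD t = 0) (hcsDu : ∀ t, rhoDu t * (gDbar - gD t) = 0)
    (hcsCl : ∀ t, rhoCl t * gC t = 0) (hcsCu : ∀ t, rhoCu t * (gCbar - gC t) = 0)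
    -- fixed TLMP prices (price-taker assumption)
    (piD piC : Fin T → ℝ)
    (hpiD : ∀ t, piD t = lam t - phi t / xiD)
    (hpiC : ∀ t, piC t = lam t - xiC * phi t) :
    ∀ pD pC e' : Fin T → ℝ,
      Feasible gDbar gCbar Elo Ehi e0 xiD xiC pD pC e' →
      profitNU piD piC qD qC pD pC ≤ profitNU piD piC qD qC gD gC :=
  TLMP_truthful_bidding_optimal_general T gDbar gCbar Elo Ehi e0 xiD xiC qD qC gD gC lam phi rhoDl
    rhoDu rhoCl rhoCu hrhoDl hrhoDu hrhoCl hrhoCu hstatD hstatC hcsDl hcsDu hcsCl hcsCu piD piC hpiD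
    hpiC
end

section
/- (Theorem 2, discharging-bid version: truthful bidding is suboptimal under uniform pricing with LOC uplifts.) In the setting of the previous statement — uniform price π ∈ ℝᵀ, true marginal costs qᴰ, qᶜ ∈ ℝᵀ, interval t*, discharging bid parameter θ entering the bid cost F(x,θ) = θ·x_{t*} + Σ_{t≠t*} a_t x_t, dispatch maps gᴰ, gᶜ : ℝ → ℝᵀ and self-schedule maps pᴰ, pᶜ : ℝ → ℝᵀ constant on a neighborhood of θ*, and total profit Π(θ) equal to the true surplus at the dispatch plus the lost opportunity cost LOC(θ) — if gᴰ_{t*}(θ*) ≠ pᴰ_{t*}(θ*), then θ* is not a local maximum of Π: in every neighborhood of θ* there is a bid θ with Π(θ) > Π(θ*). In particular, it is suboptimal for the price-taking ESR to bid its true marginal discharging cost. -/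
open Finset

/-- Bid-in discharging cost of the schedule `x` when the discharging bid at interval
`t*` is `θ` and the remaining bids are `a`: `F(x,θ) = θ·x_{t*} + Σ_{t≠t*} a_t x_t`. -/
noncomputable def bidF {T : ℕ} (a : Fin T → ℝ) (tstar : Fin T) (x : Fin T → ℝ)
    (θ : ℝ) : ℝ :=
  θ * x tstar + ∑ t ∈ Finset.univ.erase tstar, a t * x t

/-- Bid-in charging benefit of the schedule `y` with bids `b`: `H(y) = Σ_t b_t y_t`. -/
noncomputable def bidH {T : ℕ} (b y : Fin T → ℝ) : ℝ := ∑ t, b t * y t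

/-- Lost opportunity cost as a function of the discharging bid parameter `θ`:
the profit (at bid-in costs) of the self-schedule `(pᴰ(θ),pᶜ(θ))` minus the profit
(at bid-in costs) of the dispatch `(gᴰ(θ),gᶜ(θ))`, under the uniform price `π`. -/
noncomputable def LOCfun {T : ℕ} (π a b : Fin T → ℝ) (tstar : Fin T)
    (gD gC pD pC : ℝ → Fin T → ℝ) (θ : ℝ) : ℝ :=
  ((∑ t, π t * pD θ t) - bidF a tstar (pD θ) θ + bidH b (pC θ) - ∑ t, π t * pC θ t)
  - ((∑ t, π t * gD θ t) - bidF a tstar (gD θ) θ + bidH b (gC θ) - ∑ t, π t * gC θ t)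

/-- Total profit of the price-taking ESR as a function of the discharging bid
parameter `θ`: true surplus at the dispatch plus the LOC uplift. -/
noncomputable def totalProfit {T : ℕ} (π qD qC a b : Fin T → ℝ) (tstar : Fin T)
    (gD gC pD pC : ℝ → Fin T → ℝ) (θ : ℝ) : ℝ :=
  (∑ t, π t * gD θ t) - (∑ t, qD t * gD θ t) + (∑ t, qC t * gC θ t)
  - (∑ t, π t * gC θ t) + LOCfun π a b tstar gD gC pD pC θ

/-!
Fixing the schedules, the bid parameter `θ` enters the total profit only through the two
`θ * x_{t*}` terms of the LOC, so near `θ*` the profit is affine in `θ` with slope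
`gᴰ_{t*}(θ*) - pᴰ_{t*}(θ*)`. A nonzero derivative rules out a local maximum (Fermat).
-/

open Topology

theorem bidF_sub_bidF {T : ℕ} (a : Fin T → ℝ) (tstar : Fin T) (x : Fin T → ℝ) (θ θ' : ℝ) :
    bidF a tstar x θ - bidF a tstar x θ' = (θ - θ') * x tstar := by
  simp only [bidF]
  ring

theorem totalProfit_sub_totalProfit {T : ℕ} (π qD qC a b : Fin T → ℝ) (tstar : Fin T)
    {gD gC pD pC : ℝ → Fin T → ℝ} {θ θ' : ℝ} (hgD : gD θ = gD θ') (hgC : gC θ = gC θ')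
    (hpD : pD θ = pD θ') (hpC : pC θ = pC θ') :
    totalProfit π qD qC a b tstar gD gC pD pC θ - totalProfit π qD qC a b tstar gD gC pD pC θ'
      = (θ - θ') * (gD θ' tstar - pD θ' tstar) := by
  have hgF := bidF_sub_bidF a tstar (gD θ') θ θ'
  have hpF := bidF_sub_bidF a tstar (pD θ') θ θ'
  simp only [totalProfit, LOCfun, hgD, hgC, hpD, hpC]
  linear_combination hgF - hpF

theorem hasDerivAt_totalProfit {T : ℕ} (π qD qC a b : Fin T → ℝ) (tstar : Fin T)
    {gD gC pD pC : ℝ → Fin T → ℝ} {θstar : ℝ}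
    (hconst : ∀ᶠ θ in 𝓝 θstar,
      gD θ = gD θstar ∧ gC θ = gC θstar ∧ pD θ = pD θstar ∧ pC θ = pC θstar) :
    HasDerivAt (totalProfit π qD qC a b tstar gD gC pD pC)
      (gD θstar tstar - pD θstar tstar) θstar := by
  set P := totalProfit π qD qC a b tstar gD gC pD pC
  set d := gD θstar tstar - pD θstar tstar
  have haffine : HasDerivAt (fun θ => P θstar + (θ - θstar) * d) d θstar := by
    simpa using ((hasDerivAt_id θstar).sub_const θstar).mul_const d |>.const_add (P θstar)
  refine haffine.congr_of_eventuallyEq ?_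
  filter_upwards [hconst] with θ ⟨hgD, hgC, hpD, hpC⟩
  rw [← totalProfit_sub_totalProfit π qD qC a b tstar hgD hgC hpD hpC]
  ring

theorem exists_abs_sub_lt_and_lt_of_hasDerivAt {f : ℝ → ℝ} {f' x : ℝ} (hf : HasDerivAt f f' x)
    (hf' : f' ≠ 0) : ∀ ε > (0 : ℝ), ∃ y, |y - x| < ε ∧ f x < f y := by
  by_contra! hmax
  obtain ⟨ε, hε, hle⟩ := hmax
  have hlocal : IsLocalMax f x := Metric.eventually_nhds_iff.2 ⟨ε, hε, fun y hy => hle y hy⟩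
  exact hf' (hlocal.hasDerivAt_eq_zero hf)

theorem truthful_bidding_suboptimal_discharging_general
    (T : ℕ)
    (π qD qC a b : Fin T → ℝ) (tstar : Fin T)
    (gD gC pD pC : ℝ → Fin T → ℝ) (θstar : ℝ)
    (hconst : ∃ ε > 0, ∀ θ : ℝ, |θ - θstar| < ε →
      gD θ = gD θstar ∧ gC θ = gC θstar ∧ pD θ = pD θstar ∧ pC θ = pC θstar)
    (hneq : gD θstar tstar ≠ pD θstar tstar) :
    ∀ ε > (0:ℝ), ∃ θ : ℝ, |θ - θstar| < ε ∧
      totalProfit π qD qC a b tstar gD gC pD pC θstar <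
      totalProfit π qD qC a b tstar gD gC pD pC θ := by
  obtain ⟨ε, hε, hc⟩ := hconst
  have hconst' : ∀ᶠ θ in 𝓝 θstar,
      gD θ = gD θstar ∧ gC θ = gC θstar ∧ pD θ = pD θstar ∧ pC θ = pC θstar :=
    Metric.eventually_nhds_iff.2 ⟨ε, hε, fun θ hθ => hc θ hθ⟩
  exact exists_abs_sub_lt_and_lt_of_hasDerivAt
    (hasDerivAt_totalProfit π qD qC a b tstar hconst') (sub_ne_zero.2 hneq)

/-- Theorem 2, discharging-bid version: if the dispatch and
self-schedule maps are constant on a neighborhood of `θ*` and the dispatched and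
self-scheduled discharging quantities at `t*` differ, then `θ*` is not a local maximum
of the total profit `Π`: every neighborhood of `θ*` contains a bid with strictly higher
profit. In particular, truthful bidding is suboptimal under uniform pricing with LOC
uplifts. -/
theorem truthful_bidding_suboptimal_discharging
    (T : ℕ) (hT : 1 ≤ T)
    (π qD qC a b : Fin T → ℝ) (tstar : Fin T)
    (gD gC pD pC : ℝ → Fin T → ℝ) (θstar : ℝ)
    (hconst : ∃ ε > 0, ∀ θ : ℝ, |θ - θstar| < ε →
      gD θ = gD θstar ∧ gC θ = gC θstar ∧ pD θ = pD θstar ∧ pC θ = pC θstar)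
    (hneq : gD θstar tstar ≠ pD θstar tstar) :
    ∀ ε > (0:ℝ), ∃ θ : ℝ, |θ - θstar| < ε ∧
      totalProfit π qD qC a b tstar gD gC pD pC θstar <
      totalProfit π qD qC a b tstar gD gC pD pC θ :=
  truthful_bidding_suboptimal_discharging_general T π qD qC a b tstar gD gC pD pC θstar hconst hneq
end

section
/- (Theorem 2, charging-bid version.) Fix a uniform price π ∈ ℝᵀ, true marginal costs qᴰ, qᶜ ∈ ℝᵀ, baseline bid parameters a, b ∈ ℝᵀ, and an interval t*. For a scalar charging bid parameter θ ∈ ℝ, define the bid-in charging benefit of y ∈ ℝᵀ as H(y,θ) = θ·y_{t*} + Σ_{t≠t*} b_t y_t and the bid-in discharging cost of x ∈ ℝᵀ as F(x) = Σ_t a_t x_t. Let the dispatch maps gᴰ, gᶜ : ℝ → ℝᵀ and self-schedule maps pᴰ, pᶜ : ℝ → ℝᵀ be constant on a neighborhood of θ*. Define LOC(θ) = [Σ_t π_t pᴰ_t(θ) − F(pᴰ(θ)) + H(pᶜ(θ),θ) − Σ_t π_t pᶜ_t(θ)] − [Σ_t π_t gᴰ_t(θ) − F(gᴰ(θ)) +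 H(gᶜ(θ),θ) − Σ_t π_t gᶜ_t(θ)] and Π(θ) = Σ_t π_t gᴰ_t(θ) − Σ_t qᴰ_t gᴰ_t(θ) + Σ_t qᶜ_t gᶜ_t(θ) − Σ_t π_t gᶜ_t(θ) + LOC(θ). Then Π is differentiable at θ* with Π′(θ*) = pᶜ_{t*}(θ*) − gᶜ_{t*}(θ*); and if gᶜ_{t*}(θ*) ≠ pᶜ_{t*}(θ*), then θ* is not a local maximum of Π, so it is suboptimal for the price-taking ESR to bid its true marginal charging benefit. -/
open Finset

/-- Bid-in charging benefit of the schedule `y` when the charging bid at interval `t*`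
is `θ` and the remaining bids are `b`: `H(y,θ) = θ·y_{t*} + Σ_{t≠t*} b_t y_t`. -/
noncomputable def bidHθ {T : ℕ} (b : Fin T → ℝ) (tstar : Fin T) (y : Fin T → ℝ)
    (θ : ℝ) : ℝ :=
  θ * y tstar + ∑ t ∈ Finset.univ.erase tstar, b t * y t

/-- Bid-in discharging cost of the schedule `x` with bids `a`: `F(x) = Σ_t a_t x_t`. -/
noncomputable def bidFc {T : ℕ} (a x : Fin T → ℝ) : ℝ := ∑ t, a t * x t

/-- Lost opportunity cost as a function of the charging bid parameter `θ`. -/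
noncomputable def LOCfunC {T : ℕ} (π a b : Fin T → ℝ) (tstar : Fin T)
    (gD gC pD pC : ℝ → Fin T → ℝ) (θ : ℝ) : ℝ :=
  ((∑ t, π t * pD θ t) - bidFc a (pD θ) + bidHθ b tstar (pC θ) θ - ∑ t, π t * pC θ t)
  - ((∑ t, π t * gD θ t) - bidFc a (gD θ) + bidHθ b tstar (gC θ) θ - ∑ t, π t * gC θ t)

/-- Total profit of the price-taking ESR as a function of the charging bid parameter
`θ`: true surplus at the dispatch plus the LOC uplift. -/
noncomputable def totalProfitC {T : ℕ} (π qD qC a b : Fin T → ℝ) (tstar : Fin T)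
    (gD gC pD pC : ℝ → Fin T → ℝ) (θ : ℝ) : ℝ :=
  (∑ t, π t * gD θ t) - (∑ t, qD t * gD θ t) + (∑ t, qC t * gC θ t)
  - (∑ t, π t * gC θ t) + LOCfunC π a b tstar gD gC pD pC θ

/-
While the dispatch and self-schedule stay fixed, the only dependence of `Π` on the charging
bid `θ` is through the two terms `θ · pᶜ_{t*}` and `−θ · gᶜ_{t*}` of the LOC, so `Π` is affine
near `θ*` with slope `pᶜ_{t*} − gᶜ_{t*}`. A nonzero derivative rules out a local maximum
(Fermat), so some nearby bid earns strictly more.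
-/

open Filter Topology

section

variable {T : ℕ} (π qD qC a b : Fin T → ℝ) (tstar : Fin T) (gD gC pD pC : ℝ → Fin T → ℝ)

lemma totalProfitC_eq_add_of_schedules_eq {θ θ' : ℝ} (hgD : gD θ = gD θ')
    (hgC : gC θ = gC θ') (hpD : pD θ = pD θ') (hpC : pC θ = pC θ') :
    totalProfitC π qD qC a b tstar gD gC pD pC θ =
      totalProfitC π qD qC a b tstar gD gC pD pC θ' + (θ - θ') * (pC θ' tstar - gC θ' tstar) := by
  simp only [totalProfitC, LOCfunC, bidHθ, bidFc, hgD, hgC, hpD, hpC]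
  ring

end

lemma hasDerivAt_of_eventuallyEq_affine {f : ℝ → ℝ} {x s : ℝ}
    (h : ∀ᶠ y in 𝓝 x, f y = f x + (y - x) * s) : HasDerivAt f s x := by
  have haffine : HasDerivAt (fun y => f x + (y - x) * s) s x := by
    simpa using (((hasDerivAt_id x).sub_const x).mul_const s).const_add (f x)
  exact haffine.congr_of_eventuallyEq h

lemma exists_abs_sub_lt_and_lt_of_hasDerivAt_ne_zero {f : ℝ → ℝ} {x f' : ℝ}
    (hf : HasDerivAt f f' x) (hf' : f' ≠ 0) {ε : ℝ} (hε : 0 < ε) :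
    ∃ y, |y - x| < ε ∧ f x < f y := by
  have hnotMax : ¬IsLocalMax f x := fun hmax => hf' (hmax.hasDerivAt_eq_zero hf)
  have hfreq : ∃ᶠ y in 𝓝 x, f x < f y := by
    simpa [IsLocalMax, IsMaxFilter, Filter.not_eventually] using hnotMax
  obtain ⟨y, hlt, hy⟩ := (hfreq.and_eventually (Metric.ball_mem_nhds x hε)).exists
  exact ⟨y, by rwa [Real.dist_eq] at hy, hlt⟩

theorem truthful_bidding_suboptimal_charging_general
    (T : ℕ)
    (π qD qC a b : Fin T → ℝ) (tstar : Fin T)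
    (gD gC pD pC : ℝ → Fin T → ℝ) (θstar : ℝ)
    (hconst : ∃ ε > 0, ∀ θ : ℝ, |θ - θstar| < ε →
      gD θ = gD θstar ∧ gC θ = gC θstar ∧ pD θ = pD θstar ∧ pC θ = pC θstar) :
    HasDerivAt (totalProfitC π qD qC a b tstar gD gC pD pC)
      (pC θstar tstar - gC θstar tstar) θstar ∧
    (gC θstar tstar ≠ pC θstar tstar →
      ∀ ε > (0:ℝ), ∃ θ : ℝ, |θ - θstar| < ε ∧
        totalProfitC π qD qC a b tstar gD gC pD pC θstar <
        totalProfitC π qD qC a b tstar gD gC pD pC θ) := by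
  have hlocallyAffine : ∀ᶠ θ in 𝓝 θstar,
      totalProfitC π qD qC a b tstar gD gC pD pC θ =
        totalProfitC π qD qC a b tstar gD gC pD pC θstar +
          (θ - θstar) * (pC θstar tstar - gC θstar tstar) := by
    obtain ⟨ε, hε, hfixed⟩ := hconst
    refine Metric.eventually_nhds_iff.2 ⟨ε, hε, fun θ hθ => ?_⟩
    obtain ⟨hgD, hgC, hpD, hpC⟩ := hfixed θ (by rwa [← Real.dist_eq])
    exact totalProfitC_eq_add_of_schedules_eq π qD qC a b tstar gD gC pD pC hgD hgC hpD hpC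
  have hderiv := hasDerivAt_of_eventuallyEq_affine hlocallyAffine
  exact ⟨hderiv, fun hne _ hε =>
    exists_abs_sub_lt_and_lt_of_hasDerivAt_ne_zero hderiv (sub_ne_zero.2 hne.symm) hε⟩

/-- Theorem 2, charging-bid version: if the dispatch and self-schedule
maps are constant on a neighborhood of `θ*`, then the total profit `Π` is differentiable
at `θ*` with `Π′(θ*) = pᶜ_{t*}(θ*) − gᶜ_{t*}(θ*)`; and if the dispatched and
self-scheduled charging quantities at `t*` differ, then `θ*` is not a local maximum of
`Π`, so truthful bidding of the marginal charging benefit is suboptimal. -/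
theorem truthful_bidding_suboptimal_charging
    (T : ℕ) (hT : 1 ≤ T)
    (π qD qC a b : Fin T → ℝ) (tstar : Fin T)
    (gD gC pD pC : ℝ → Fin T → ℝ) (θstar : ℝ)
    (hconst : ∃ ε > 0, ∀ θ : ℝ, |θ - θstar| < ε →
      gD θ = gD θstar ∧ gC θ = gC θstar ∧ pD θ = pD θstar ∧ pC θ = pC θstar) :
    HasDerivAt (totalProfitC π qD qC a b tstar gD gC pD pC)
      (pC θstar tstar - gC θstar tstar) θstar ∧
    (gC θstar tstar ≠ pC θstar tstar →
      ∀ ε > (0:ℝ), ∃ θ : ℝ, |θ - θstar| < ε ∧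
        totalProfitC π qD qC a b tstar gD gC pD pC θstar <
        totalProfitC π qD qC a b tstar gD gC pD pC θ) :=
  truthful_bidding_suboptimal_charging_general T π qD qC a b tstar gD gC pD pC θstar hconst
end

section
/- (Generator decoupling under TLMP.) Consider a single generator with linear bid-in marginal costs c ∈ ℝᵀ, capacity ḡ > 0, ramp limits r̄, r̲ > 0 and given initial output g₀; its feasible set consists of g ∈ ℝᵀ with 0 ≤ g_t ≤ ḡ for all t and −r̲ ≤ g_{t+1} − g_t ≤ r̄ for t = 0,…,T−1. Suppose g is feasible and there exist λ ∈ ℝᵀ and nonnegative multipliers μ̄_t, μ̲_t (t = 0,…,T−1) and ρ̄_t, ρ̲_t (t = 1,…,T) satisfying complementary slackness — μ̄_t (r̄ − g_{t+1} + g_t) = 0, μ̲_t (r̲ + g_{t+1} − g_t) = 0, ρ̲_t g_t = 0, ρ̄_t (ḡ − g_t) = 0 — and the stationarity conditions c_t − λ_t + Δμ_{t−1} − Δμ_t + ρ̄_t − ρ̲_t = 0 for t = 1,…,T, where Δμ_t = μ̄_t − μ̲_t and Δμ_T := 0. Define the generator's TLMP by π_t = λ_t + Δμ_t − Δμ_{t−1}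 (energy price plus ramping price). Then g maximizes the generator's profit Σ_{t=1}^T (π_t − c_t) x_t over all x ∈ ℝᵀ with 0 ≤ x_t ≤ ḡ for all t — in particular over the generator's feasible set — so the generator's lost opportunity cost under TLMP is zero. -/
open Finset

/-- Feasibility of a generator production schedule `g` over intervals `t = 1,…,T`
(index `0` holds the given initial output `g₀`): capacity and ramp limits. -/
def GenFeasible (T : ℕ) (gbar rup rdn g0 : ℝ) (g : ℕ → ℝ) : Prop :=
  g 0 = g0 ∧ ∀ t ∈ Finset.Icc 1 T,
    0 ≤ g t ∧ g t ≤ gbar ∧ g t - g (t - 1) ≤ rup ∧ g (t - 1) - g t ≤ rdn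

/-!
The ramping price `Δμ_t − Δμ_{t−1}` in the TLMP cancels exactly the ramp multipliers in the
stationarity condition, so the generator's margin `π_t − c_t` equals `ρ̄_t − ρ̲_t`. The profit
is then separable over intervals, and in each interval complementary slackness of the capacity
constraints makes `g_t` a maximiser of `(ρ̄_t − ρ̲_t) x` over `0 ≤ x ≤ ḡ`.
-/

lemma tlmp_sub_cost_eq {pi c lam Δprev Δ ρu ρl : ℝ} (hpi : pi = lam + (Δ - Δprev))
    (hstat : c - lam + (Δprev - Δ) + ρu - ρl = 0) : pi - c = ρu - ρl := by
  linarith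

lemma sub_mul_le_sub_mul_of_complementary_slackness_s13 {ρu ρl gbar g x : ℝ}
    (hρu : 0 ≤ ρu) (hρl : 0 ≤ ρl) (hcs_l : ρl * g = 0) (hcs_u : ρu * (gbar - g) = 0)
    (hx0 : 0 ≤ x) (hx1 : x ≤ gbar) :
    (ρu - ρl) * x ≤ (ρu - ρl) * g := by
  linarith [mul_nonneg hρl hx0, mul_nonneg hρu (sub_nonneg.2 hx1)]

theorem generator_decoupling_under_TLMP_general
    (T : ℕ)
    (c : ℕ → ℝ) (gbar : ℝ)
    (g : ℕ → ℝ)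
    (lam : ℕ → ℝ)
    (mub mul : ℕ → ℝ)          -- ramp multipliers, for t = 0,…,T−1
    (rhou rhol : ℕ → ℝ)        -- capacity multipliers, for t = 1,…,T
    -- nonnegativity
    (hrho_nn : ∀ t ∈ Finset.Icc 1 T, 0 ≤ rhou t ∧ 0 ≤ rhol t)
    -- complementary slackness
    (hcs_cap : ∀ t ∈ Finset.Icc 1 T,
      rhol t * g t = 0 ∧ rhou t * (gbar - g t) = 0)
    -- stationarity: c_t − λ_t + Δμ_{t−1} − Δμ_t + ρ̄_t − ρ̲_t = 0
    (hstat : ∀ t ∈ Finset.Icc 1 T,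
      c t - lam t + ((mub (t - 1) - mul (t - 1)) - (mub t - mul t))
        + rhou t - rhol t = 0)
    -- the generator's TLMP: energy price plus ramping price
    (pi : ℕ → ℝ)
    (hpi : ∀ t ∈ Finset.Icc 1 T,
      pi t = lam t + ((mub t - mul t) - (mub (t - 1) - mul (t - 1)))) :
    ∀ x : ℕ → ℝ, (∀ t ∈ Finset.Icc 1 T, 0 ≤ x t ∧ x t ≤ gbar) →
      ∑ t ∈ Finset.Icc 1 T, (pi t - c t) * x t ≤
      ∑ t ∈ Finset.Icc 1 T, (pi t - c t) * g t := by
  intro x hx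
  refine sum_le_sum fun t ht => ?_
  obtain ⟨hρu, hρl⟩ := hrho_nn t ht
  obtain ⟨hcs_l, hcs_u⟩ := hcs_cap t ht
  obtain ⟨hx0, hx1⟩ := hx t ht
  rw [tlmp_sub_cost_eq (hpi t ht) (hstat t ht)]
  exact sub_mul_le_sub_mul_of_complementary_slackness_s13 hρu hρl hcs_l hcs_u hx0 hx1

/-- generator decoupling under TLMP: if a feasible generator schedule
admits multipliers satisfying the KKT conditions of the dispatch, then under the TLMP
prices `π_t = λ_t + Δμ_t − Δμ_{t−1}` (energy price plus ramping price) the schedule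
maximizes the generator's profit over all schedules satisfying the capacity bounds
alone — in particular over the generator's feasible set — so its lost opportunity cost
under TLMP is zero. -/
theorem generator_decoupling_under_TLMP
    (T : ℕ) (hT : 1 ≤ T)
    (c : ℕ → ℝ) (gbar rup rdn g0 : ℝ)
    (hgbar : 0 < gbar) (hrup : 0 < rup) (hrdn : 0 < rdn)
    (g : ℕ → ℝ)
    (hfeas : GenFeasible T gbar rup rdn g0 g)
    (lam : ℕ → ℝ)
    (mub mul : ℕ → ℝ)          -- ramp multipliers, for t = 0,…,T−1
    (rhou rhol : ℕ → ℝ)        -- capacity multipliers, for t = 1,…,T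
    -- nonnegativity
    (hmu_nn : ∀ t < T, 0 ≤ mub t ∧ 0 ≤ mul t)
    (hrho_nn : ∀ t ∈ Finset.Icc 1 T, 0 ≤ rhou t ∧ 0 ≤ rhol t)
    -- convention Δμ_T := 0
    (hmuT : mub T = 0 ∧ mul T = 0)
    -- complementary slackness
    (hcs_ramp : ∀ t < T,
      mub t * (rup - (g (t + 1) - g t)) = 0 ∧
      mul t * (rdn + (g (t + 1) - g t)) = 0)
    (hcs_cap : ∀ t ∈ Finset.Icc 1 T,
      rhol t * g t = 0 ∧ rhou t * (gbar - g t) = 0)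
    -- stationarity: c_t − λ_t + Δμ_{t−1} − Δμ_t + ρ̄_t − ρ̲_t = 0
    (hstat : ∀ t ∈ Finset.Icc 1 T,
      c t - lam t + ((mub (t - 1) - mul (t - 1)) - (mub t - mul t))
        + rhou t - rhol t = 0)
    -- the generator's TLMP: energy price plus ramping price
    (pi : ℕ → ℝ)
    (hpi : ∀ t ∈ Finset.Icc 1 T,
      pi t = lam t + ((mub t - mul t) - (mub (t - 1) - mul (t - 1)))) :
    ∀ x : ℕ → ℝ, (∀ t ∈ Finset.Icc 1 T, 0 ≤ x t ∧ x t ≤ gbar) →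
      ∑ t ∈ Finset.Icc 1 T, (pi t - c t) * x t ≤
      ∑ t ∈ Finset.Icc 1 T, (pi t - c t) * g t :=
  generator_decoupling_under_TLMP_general T c gbar g lam mub mul rhou rhol hrho_nn hcs_cap hstat pi
    hpi
end
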